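/- arXiv:0903.2328 — 3 statements merged into one kernel-verified Lean document; each statement's English description precedes it below -/
import Mathlib

section
/- With P_k defined by P_1(X) = X and P_{k+1}(X) = P_k'(X)·X·(1 - X) + (k+1)·X·P_k(X), let A_{k-1} denote the coefficient of X^{k-1} in P_k. Then A_k = k + 2·A_{k-1} for all k ≥ 2, with A_0 = 0 and A_1 = 1. -/
open Polynomial

/-
Write `P_{k+1} = T_{k+1}(P_k)` with `T_c(p) = p'·X·(1 - X) + c·X·p`. Reading off coefficients,
`[X^{n+1}] T_c(p) = (n+1)·[X^{n+1}] p + (c - n)·[X^n] p` for every `n`. With `c = k + 1` and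
`n = k` the leading coefficient of `P_k` is carried over unchanged, so every `P_k` is monic of
degree `k`; with `n = k - 1` the same identity is the recurrence `A_k = k + 2·A_{k-1}`.
-/

namespace Polynomial

variable {R : Type*} [CommRing R]

noncomputable def eulerStep (c : R) (p : R[X]) : R[X] :=
  derivative p * X * (1 - X) + C c * X * p

theorem coeff_eulerStep_succ (c : R) (p : R[X]) (n : ℕ) :
    (eulerStep c p).coeff (n + 1) = (n + 1) * p.coeff (n + 1) + (c - n) * p.coeff n := by
  have hsplit : eulerStep c p = derivative p * X - derivative p * X * X + C c * (X * p) := by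
    rw [eulerStep]; ring
  rw [hsplit]
  cases n with
  | zero => simp [coeff_derivative]
  | succ m =>
    simp only [coeff_add, coeff_sub, coeff_mul_X, coeff_derivative, coeff_C_mul, coeff_X_mul]
    push_cast
    ring

theorem natDegree_eulerStep_le (c : R) {p : R[X]} {n : ℕ} (hp : p.natDegree ≤ n) :
    (eulerStep c p).natDegree ≤ n + 1 := by
  refine natDegree_le_iff_coeff_eq_zero.mpr fun m hm => ?_
  obtain ⟨m, rfl⟩ : ∃ m', m = m' + 1 := Nat.exists_eq_add_one.mpr (by omega)
  rw [coeff_eulerStep_succ, coeff_eq_zero_of_natDegree_lt (by omega : p.natDegree < m + 1),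
    coeff_eq_zero_of_natDegree_lt (by omega : p.natDegree < m)]
  ring

end Polynomial

/-- With `P_k` defined by `P_1(X) = X` and
`P_{k+1}(X) = P_k'(X)·X·(1 - X) + (k+1)·X·P_k(X)`, let `A_{k-1}` denote the coefficient
of `X^{k-1}` in `P_k`. Then `A_k = k + 2·A_{k-1}` for all `k ≥ 2`, with `A_0 = 0` and
`A_1 = 1`. -/
theorem recurrence_subleading_coeff (P : ℕ → Polynomial ℂ)
    (h1 : P 1 = X)
    (hrec : ∀ k : ℕ, 1 ≤ k →
      P (k + 1) = (derivative (P k)) * X * (1 - X) + C ((k : ℂ) + 1) * X * P k) :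
    (P 1).coeff 0 = 0 ∧ (P 2).coeff 1 = 1 ∧
      ∀ k : ℕ, 2 ≤ k → (P (k + 1)).coeff k = (k : ℂ) + 2 * (P k).coeff (k - 1) := by
  have hstep : ∀ k, 1 ≤ k → P (k + 1) = eulerStep ((k : ℂ) + 1) (P k) := hrec
  have hmonic : ∀ k, 1 ≤ k → (P k).natDegree ≤ k ∧ (P k).coeff k = 1 := by
    intro k hk
    induction k, hk using Nat.le_induction with
    | base => simp [h1]
    | succ k hk ih =>
      rw [hstep k hk]
      refine ⟨natDegree_eulerStep_le _ ih.1, ?_⟩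
      rw [coeff_eulerStep_succ, coeff_eq_zero_of_natDegree_lt (by omega), ih.2]
      ring
  have hsublead : ∀ k, 1 ≤ k → (P (k + 1)).coeff k = (k : ℂ) + 2 * (P k).coeff (k - 1) := by
    intro k hk
    obtain ⟨m, rfl⟩ := Nat.exists_eq_add_of_le' hk
    rw [hstep _ hk, coeff_eulerStep_succ, (hmonic _ hk).2, Nat.add_sub_cancel]
    push_cast
    ring
  refine ⟨by simp [h1], ?_, fun k hk => hsublead k (by omega)⟩
  simpa [h1] using hsublead 1 le_rfl
end

section
/- For every integer k ≥ 3, the function g(z) = 1/(1 - e^z) has a zero of its k-th derivative at some point z with e^z not of modulus 1, i.e., with Re(z) ≠ 0; consequently g^{(k)} has infinitely many zeros off the imaginary axis. -/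
/-!
On the line `Im z = π` the function `g(z) = 1/(1 - eᶻ)` is real:
`g(x + πi) = φ(x) = 1/(1 + eˣ)` (`fermiDirac`). Since `g' = g² - g`, each derivative `g⁽ᵏ⁾` is
`Pₖ(g)` for a polynomial `Pₖ = derivTower (X² - X) k` with `Pₖ(0) = 0`, so `φ⁽ᵏ⁾ = Pₖ(φ)` tends
to `0` at `+∞`. Rolle's theorem on `(a, ∞)` therefore turns a zero `a` of `φ⁽ᵏ⁾` into a zero of
`φ⁽ᵏ⁺¹⁾` beyond `a`. Starting from `φ''(0) = 0` this gives, for `k ≥ 3`, a zero `x > 0` of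
`φ⁽ᵏ⁾`, and the `2πi`-translates of `x + πi` are zeros of `g⁽ᵏ⁾` off the imaginary axis.
-/

open Complex Polynomial Filter Set Topology Function
open scoped Real

namespace Polynomial

variable {R S : Type*} [CommSemiring R] [CommSemiring S]

noncomputable def derivTower (Q : R[X]) : ℕ → R[X]
  | 0 => X
  | j + 1 => derivative (derivTower Q j) * Q

theorem map_derivTower (φ : R →+* S) (Q : R[X]) (j : ℕ) :
    (derivTower Q j).map φ = derivTower (Q.map φ) j := by
  induction j with
  | zero => simp [derivTower]
  | succ j ih => rw [derivTower, derivTower, Polynomial.map_mul, ← ih, derivative_map]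

theorem eval_zero_derivTower {Q : R[X]} (hQ : Q.eval 0 = 0) (j : ℕ) :
    (derivTower Q j).eval 0 = 0 := by
  cases j <;> simp [derivTower, hQ]

end Polynomial

section AutonomousODE

variable {𝕜 : Type*} [NontriviallyNormedField 𝕜] {f : 𝕜 → 𝕜} {Q : 𝕜[X]}

theorem HasDerivAt.eval_derivTower {x : 𝕜} (hf : HasDerivAt f (Q.eval (f x)) x) (j : ℕ) :
    HasDerivAt (fun y => (derivTower Q j).eval (f y)) ((derivTower Q (j + 1)).eval (f x)) x := by
  rw [derivTower, eval_mul]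
  exact ((derivTower Q j).hasDerivAt (f x)).comp x hf

theorem iteratedDeriv_eqOn_eval_derivTower {U : Set 𝕜} (hU : IsOpen U)
    (hf : ∀ x ∈ U, HasDerivAt f (Q.eval (f x)) x) (j : ℕ) :
    EqOn (iteratedDeriv j f) (fun x => (derivTower Q j).eval (f x)) U := by
  induction j with
  | zero => intro x _; simp [derivTower]
  | succ j ih =>
    intro x hx
    rw [iteratedDeriv_succ, (ih.eventuallyEq_of_mem (hU.mem_nhds hx)).deriv_eq]
    exact ((hf x hx).eval_derivTower j).deriv

end AutonomousODE

theorem Function.Periodic.iteratedDeriv {𝕜 F : Type*} [NontriviallyNormedField 𝕜]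
    [NormedAddCommGroup F] [NormedSpace 𝕜 F] {f : 𝕜 → F} {c : 𝕜} (hf : Periodic f c) (k : ℕ) :
    Periodic (iteratedDeriv k f) c := by
  intro z
  have h := congrFun (iteratedDeriv_comp_add_const k f c) z
  rwa [show (fun w => f (w + c)) = f from funext hf, eq_comm] at h

theorem Set.infinite_of_forall_add_mem {K : Type*} [DivisionRing K] [CharZero K] {S : Set K}
    {z₀ c : K} (hc : c ≠ 0) (h₀ : z₀ ∈ S) (hS : ∀ z ∈ S, z + c ∈ S) : S.Infinite := by
  have hmem : ∀ n : ℕ, z₀ + n * c ∈ S := by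
    intro n
    induction n with
    | zero => simpa using h₀
    | succ n ih => simpa [add_mul, add_assoc] using hS _ ih
  exact infinite_of_injective_forall_mem
    ((add_right_injective z₀).comp ((mul_left_injective₀ hc).comp Nat.cast_injective)) hmem

theorem exists_hasDerivAt_eq_zero_Ioi {f f' : ℝ → ℝ} {a l : ℝ}
    (hfa : Tendsto f (𝓝[>] a) (𝓝 l)) (hfb : Tendsto f atTop (𝓝 l))
    (hff' : ∀ x ∈ Ioi a, HasDerivAt f (f' x) x) : ∃ c ∈ Ioi a, f' c = 0 := by
  set ψ : ℝ → ℝ := fun t => a - Real.log t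
  have hψ_pos : ∀ t ∈ Ioo (0 : ℝ) 1, ψ t ∈ Ioi a := fun t ht => by
    simp only [ψ, mem_Ioi]; linarith [Real.log_neg ht.1 ht.2]
  have hψ0 : Tendsto ψ (𝓝[>] 0) atTop :=
    tendsto_atTop_add_const_left _ a (tendsto_neg_atBot_atTop.comp Real.tendsto_log_nhdsGT_zero)
  have hψ1 : Tendsto ψ (𝓝[<] 1) (𝓝[>] a) := by
    refine tendsto_nhdsWithin_iff.2 ⟨?_, ?_⟩
    · have : Tendsto ψ (𝓝 1) (𝓝 (a - Real.log 1)) :=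
        (continuousAt_const.sub (Real.continuousAt_log one_ne_zero)).tendsto
      simpa using this.mono_left nhdsWithin_le_nhds
    · filter_upwards [Ioo_mem_nhdsLT zero_lt_one] with t ht using hψ_pos t ht
  obtain ⟨c, hc, hc0⟩ := exists_hasDerivAt_eq_zero' zero_lt_one (hfb.comp hψ0) (hfa.comp hψ1)
    fun t ht => (hff' _ (hψ_pos t ht)).comp t
      ((hasDerivAt_const t a).sub (Real.hasDerivAt_log ht.1.ne'))
  refine ⟨ψ c, hψ_pos c hc, ?_⟩
  simpa [hc.1.ne'] using hc0

noncomputable def fermiDirac (x : ℝ) : ℝ := (1 + Real.exp x)⁻¹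

theorem hasDerivAt_fermiDirac (x : ℝ) :
    HasDerivAt fermiDirac ((X ^ 2 - X : ℝ[X]).eval (fermiDirac x)) x := by
  have hx : 1 + Real.exp x ≠ 0 := by positivity
  refine (((Real.hasDerivAt_exp x).const_add 1).inv hx).congr_deriv ?_
  simp only [fermiDirac, eval_sub, eval_pow, eval_X]
  field_simp
  ring

theorem tendsto_fermiDirac_atTop : Tendsto fermiDirac atTop (𝓝 0) :=
  (tendsto_atTop_add_const_left _ 1 Real.tendsto_exp_atTop).inv_tendsto_atTop

theorem exists_gt_eval_derivTower_fermiDirac_eq_zero {j : ℕ} {a : ℝ}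
    (ha : (derivTower (X ^ 2 - X) j).eval (fermiDirac a) = 0) :
    ∃ c > a, (derivTower (X ^ 2 - X) (j + 1)).eval (fermiDirac c) = 0 := by
  have hderiv := fun x => (hasDerivAt_fermiDirac x).eval_derivTower j
  have hlim : (derivTower (X ^ 2 - X : ℝ[X]) j).eval 0 = 0 := eval_zero_derivTower (by simp) j
  exact exists_hasDerivAt_eq_zero_Ioi
    (ha ▸ (hderiv a).continuousAt.continuousWithinAt.tendsto)
    (hlim ▸ ((derivTower _ j).continuous.tendsto 0).comp tendsto_fermiDirac_atTop)
    fun x _ => hderiv x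

theorem exists_pos_eval_derivTower_fermiDirac_eq_zero (j : ℕ) :
    ∃ x > 0, (derivTower (X ^ 2 - X) (j + 3)).eval (fermiDirac x) = 0 := by
  induction j with
  | zero =>
    -- `φ - 1/2` is odd, so `φ''` vanishes at `0`.
    have h : (derivTower (X ^ 2 - X : ℝ[X]) 2).eval (fermiDirac 0) = 0 := by
      norm_num [derivTower, fermiDirac]
    exact exists_gt_eval_derivTower_fermiDirac_eq_zero h
  | succ j ih =>
    obtain ⟨x, hx, hroot⟩ := ih
    obtain ⟨c, hc, hc0⟩ := exists_gt_eval_derivTower_fermiDirac_eq_zero hroot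
    exact ⟨c, hx.trans hc, hc0⟩

theorem hasDerivAt_one_div_one_sub_exp {z : ℂ} (hz : exp z ≠ 1) :
    HasDerivAt (fun w => 1 / (1 - exp w)) ((X ^ 2 - X : ℂ[X]).eval (1 / (1 - exp z))) z := by
  have hz' : 1 - exp z ≠ 0 := sub_ne_zero.2 hz.symm
  simp only [one_div]
  refine (((hasDerivAt_exp z).const_sub 1).inv hz').congr_deriv ?_
  simp only [eval_sub, eval_pow, eval_X]
  field_simp
  ring

theorem one_div_one_sub_exp_add_pi_mul_I (x : ℝ) :
    1 / (1 - exp (x + π * I)) = (fermiDirac x : ℂ) := by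
  simp [exp_add_pi_mul_I, fermiDirac, ← ofReal_exp]

theorem iteratedDeriv_one_div_one_sub_exp_add_pi_mul_I (k : ℕ) (x : ℝ) :
    iteratedDeriv k (fun w => 1 / (1 - exp w)) (x + π * I) =
      (((derivTower (X ^ 2 - X : ℝ[X]) k).eval (fermiDirac x) : ℝ) : ℂ) := by
  have hU : IsOpen {z : ℂ | exp z ≠ 1} := isOpen_compl_singleton.preimage continuous_exp
  have hx : exp (x + π * I) ≠ 1 := by
    rw [exp_add_pi_mul_I, ← ofReal_exp, ← ofReal_neg, ← ofReal_one, Ne, ofReal_inj]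
    linarith [Real.exp_pos x]
  have hQ : (X ^ 2 - X : ℂ[X]) = (X ^ 2 - X : ℝ[X]).map ofRealHom := by simp
  rw [iteratedDeriv_eqOn_eval_derivTower hU (fun z hz => hasDerivAt_one_div_one_sub_exp hz) k hx]
  beta_reduce
  rw [one_div_one_sub_exp_add_pi_mul_I, hQ, ← map_derivTower, eval_map, ← ofRealHom_eq_coe,
    eval₂_at_apply, ofRealHom_eq_coe]

/-- For every integer `k ≥ 3`, the `k`-th derivative of `g(z) = 1/(1 - e^z)` has a zero
at some point `z` with `e^z` not of modulus `1`, i.e. with `Re z ≠ 0`; consequently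
`g^{(k)}` has infinitely many zeros off the imaginary axis. -/
theorem infinitely_many_nonimaginary_zeros (k : ℕ) (hk : 3 ≤ k) :
    (∃ z : ℂ, z.re ≠ 0 ∧
        iteratedDeriv k (fun w : ℂ => 1 / (1 - Complex.exp w)) z = 0) ∧
      {z : ℂ | z.re ≠ 0 ∧
        iteratedDeriv k (fun w : ℂ => 1 / (1 - Complex.exp w)) z = 0}.Infinite := by
  obtain ⟨j, rfl⟩ := Nat.exists_eq_add_of_le' hk
  obtain ⟨x, hx, hroot⟩ := exists_pos_eval_derivTower_fermiDirac_eq_zero j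
  have hzero : (x + π * I : ℂ).re ≠ 0 ∧
      iteratedDeriv (j + 3) (fun w : ℂ => 1 / (1 - exp w)) (x + π * I) = 0 := by
    rw [iteratedDeriv_one_div_one_sub_exp_add_pi_mul_I, hroot, ofReal_zero]
    simpa using hx.ne'
  have hperiodic : Periodic (fun w : ℂ => 1 / (1 - exp w)) (2 * π * I) := fun z => by
    simp only [exp_periodic z]
  have hperiod_ne : 2 * π * I ≠ 0 := by simp [Real.pi_ne_zero]
  refine ⟨⟨_, hzero⟩, Set.infinite_of_forall_add_mem hperiod_ne hzero fun z hz => ?_⟩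
  exact ⟨by simpa using hz.1, (hperiodic.iteratedDeriv _ z).trans hz.2⟩
end

section
/- Let f(z) = D + E/(1 - S(z)e^{icz}) where c > 0, E ≠ 0, D ∈ ℂ, and S is a rational function with |S(x)| = 1 for real x and S(∞) ≠ 0, ∞. If f is real on ℝ, then all poles z of f with |z| sufficiently large are real. -/
/-!
Put `S = p / q` and `a = S(∞)`. Near infinity `S / a` stays close to `1`, so `ℓ = log (S / a)` is
holomorphic there with `ℓ' = p' / p - q' / q → 0`, and `Re ℓ = log |S| - log |a|`. At a pole `z`
we have `|S(z)| = e^{c Im z}`, while `|S| = 1` on `ℝ`, so `Re ℓ` changes by `c |Im z|` along the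
vertical segment from `Re z` to `z`. Once that segment lies where `|ℓ'| ≤ c / 2`, the mean value
theorem bounds this change by `(c / 2) |Im z|`, forcing `Im z = 0`. The segment does lie there
for `|z|` large, because `|ℓ| < 1` near infinity bounds `Im z` a priori.
-/

open Polynomial Complex Filter Topology Bornology

namespace Polynomial

variable {𝕜 : Type*} [NormedField 𝕜]

theorem tendsto_eval_div_pow_cobounded {r : 𝕜[X]} {n : ℕ} (hr : r.natDegree ≤ n) :
    Tendsto (fun w => r.eval w / w ^ n) (cobounded 𝕜) (𝓝 (r.coeff n)) := by
  have hlim : Tendsto (fun w : 𝕜 => (reflect n r).eval w⁻¹) (cobounded 𝕜)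
      (𝓝 ((reflect n r).eval 0)) :=
    ((reflect n r).continuous.tendsto 0).comp tendsto_inv₀_cobounded
  rw [← coeff_zero_eq_eval_zero, coeff_reflect, revAt_le (Nat.zero_le n), Nat.sub_zero] at hlim
  refine hlim.congr' ?_
  filter_upwards [eventually_ne_cobounded 0] with w hw
  let _ := invertibleOfNonzero hw
  rw [eq_div_iff (pow_ne_zero n hw), ← eval₂_id, ← eval₂_id, ← invOf_eq_inv,
    eval₂_reflect_mul_pow _ _ _ _ hr]

theorem tendsto_eval_div_eval_cobounded {r q : 𝕜[X]} (hq : q ≠ 0)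
    (hr : r.natDegree ≤ q.natDegree) :
    Tendsto (fun w => r.eval w / q.eval w) (cobounded 𝕜)
      (𝓝 (r.coeff q.natDegree / q.leadingCoeff)) := by
  refine ((tendsto_eval_div_pow_cobounded hr).div (tendsto_eval_div_pow_cobounded le_rfl)
    (leadingCoeff_ne_zero.mpr hq)).congr' ?_
  filter_upwards [eventually_ne_cobounded 0] with w hw
  exact div_div_div_cancel_right₀ (pow_ne_zero _ hw) _ _

theorem tendsto_derivative_div_eval_cobounded {p : 𝕜[X]} (hp : p ≠ 0) :
    Tendsto (fun w => p.derivative.eval w / p.eval w) (cobounded 𝕜) (𝓝 0) := by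
  have h := tendsto_eval_div_eval_cobounded hp
    ((natDegree_derivative_le p).trans (Nat.sub_le _ _))
  rwa [coeff_derivative, coeff_eq_zero_of_natDegree_lt (Nat.lt_succ_self _), zero_mul,
    zero_div] at h

end Polynomial

theorem hasDerivAt_log_eval_div_eval {p q : ℂ[X]} {a w : ℂ} (hq : q.eval w ≠ 0)
    (hw : p.eval w / q.eval w / a ∈ slitPlane) :
    HasDerivAt (fun w => log (p.eval w / q.eval w / a))
      (p.derivative.eval w / p.eval w - q.derivative.eval w / q.eval w) w := by
  have hpa : p.eval w / q.eval w / a ≠ 0 := slitPlane_ne_zero hw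
  have hp : p.eval w ≠ 0 := by rintro h; simp [h] at hpa
  have ha : a ≠ 0 := by rintro rfl; simp at hpa
  have hS : HasDerivAt (fun w => p.eval w / q.eval w / a)
      ((p.derivative.eval w * q.eval w - p.eval w * q.derivative.eval w) / q.eval w ^ 2 / a) w :=
    ((p.hasDerivAt w).div (q.hasDerivAt w) hq).div_const a
  convert hS.clog hw using 1
  field_simp

theorem im_eq_zero_of_re_sub_eq {ℓ ℓ' : ℂ → ℂ} {R ε c : ℝ} (hεc : ε < c)
    (hℓ : ∀ w : ℂ, R ≤ |w.re| → HasDerivAt ℓ (ℓ' w) w)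
    (hℓ' : ∀ w : ℂ, R ≤ |w.re| → ‖ℓ' w‖ ≤ ε) {z : ℂ} (hz : R ≤ |z.re|)
    (h : (ℓ z).re - (ℓ z.re).re = c * z.im) : z.im = 0 := by
  have hmvt : ‖ℓ z - ℓ z.re‖ ≤ ε * ‖z - z.re‖ :=
    (convex_hyperplane reLm.isLinear z.re).norm_image_sub_le_of_norm_hasDerivWithin_le
      (fun w (hw : w.re = z.re) => (hℓ w (hw ▸ hz)).hasDerivWithinAt)
      (fun w (hw : w.re = z.re) => hℓ' w (hw ▸ hz))
      (ofReal_re z.re) rfl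
  have hdist : ‖z - z.re‖ = |z.im| := by
    rw [show z - z.re = z.im * I by apply Complex.ext <;> simp, norm_mul, norm_I, mul_one,
      norm_real, Real.norm_eq_abs]
  have hε : 0 ≤ ε := (norm_nonneg _).trans (hℓ' z hz)
  have : c * |z.im| ≤ ε * |z.im| :=
    calc c * |z.im| = |(ℓ z - ℓ z.re).re| := by
          rw [sub_re, h, abs_mul, abs_of_pos (hε.trans_lt hεc)]
      _ ≤ ‖ℓ z - ℓ z.re‖ := abs_re_le_norm _
      _ ≤ ε * |z.im| := hdist ▸ hmvt
  exact abs_nonpos_iff.mp (by nlinarith [abs_nonneg z.im])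

theorem log_norm_eq_of_mul_exp_eq_one {u z : ℂ} {c : ℝ} (h : u * exp (I * c * z) = 1) :
    Real.log ‖u‖ = c * z.im := by
  have hnorm := congrArg norm h
  rw [norm_mul, norm_exp, norm_one] at hnorm
  have hre : (I * c * z).re = -(c * z.im) := by simp
  rw [hre, Real.exp_neg, mul_inv_eq_one₀ (Real.exp_pos _).ne'] at hnorm
  rw [hnorm, Real.log_exp]

theorem eventually_log_eval_div_eval_cobounded {p q : ℂ[X]} (hp : p ≠ 0) (hq : q ≠ 0)
    (hdeg : p.natDegree = q.natDegree) {ε : ℝ} (hε : 0 < ε) :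
    ∀ᶠ w in cobounded ℂ, q.eval w ≠ 0 ∧
      HasDerivAt (fun w => log (p.eval w / q.eval w / (p.leadingCoeff / q.leadingCoeff)))
        (p.derivative.eval w / p.eval w - q.derivative.eval w / q.eval w) w ∧
      ‖p.derivative.eval w / p.eval w - q.derivative.eval w / q.eval w‖ ≤ ε ∧
      (log (p.eval w / q.eval w / (p.leadingCoeff / q.leadingCoeff))).re =
        Real.log ‖p.eval w / q.eval w‖ - Real.log ‖p.leadingCoeff / q.leadingCoeff‖ ∧
      ‖log (p.eval w / q.eval w / (p.leadingCoeff / q.leadingCoeff))‖ < 1 := by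
  have ha : p.leadingCoeff / q.leadingCoeff ≠ 0 :=
    div_ne_zero (leadingCoeff_ne_zero.mpr hp) (leadingCoeff_ne_zero.mpr hq)
  have hS : Tendsto (fun w => p.eval w / q.eval w / (p.leadingCoeff / q.leadingCoeff))
      (cobounded ℂ) (𝓝 1) := by
    have h := (tendsto_eval_div_eval_cobounded hq hdeg.le).div_const
      (p.leadingCoeff / q.leadingCoeff)
    rwa [← hdeg, coeff_natDegree, div_self ha] at h
  have hlog := (continuousAt_clog one_mem_slitPlane).tendsto.comp hS
  rw [log_one] at hlog
  have hder := (tendsto_derivative_div_eval_cobounded hp).sub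
    (tendsto_derivative_div_eval_cobounded hq)
  rw [sub_zero] at hder
  filter_upwards [hS.eventually (isOpen_slitPlane.mem_nhds one_mem_slitPlane),
    hlog.eventually (Metric.ball_mem_nhds 0 one_pos),
    hder.eventually (Metric.closedBall_mem_nhds 0 hε)] with w hslit hsmall hderiv
  have hS₀ : p.eval w / q.eval w ≠ 0 := (div_ne_zero_iff.mp (slitPlane_ne_zero hslit)).1
  have hq₀ : q.eval w ≠ 0 := (div_ne_zero_iff.mp hS₀).2
  refine ⟨hq₀, hasDerivAt_log_eval_div_eval hq₀ hslit, by simpa using hderiv, ?_,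
    by simpa using hsmall⟩
  rw [log_re, norm_div _ (p.leadingCoeff / q.leadingCoeff),
    Real.log_div (norm_ne_zero_iff.mpr hS₀) (norm_ne_zero_iff.mpr ha)]

theorem large_poles_are_real_general (c : ℝ) (hc : 0 < c)
    (p q : Polynomial ℂ) (hp : p ≠ 0) (hq : q ≠ 0)
    (hdeg : p.natDegree = q.natDegree)
    (hmod : ∀ x : ℝ, q.eval (x : ℂ) ≠ 0 →
      ‖p.eval (x : ℂ) / q.eval (x : ℂ)‖ = 1) :
    ∃ R₀ : ℝ, ∀ z : ℂ, R₀ ≤ ‖z‖ → q.eval z ≠ 0 →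
      (p.eval z / q.eval z) * Complex.exp (Complex.I * c * z) = 1 → z.im = 0 := by
  set a := p.leadingCoeff / q.leadingCoeff
  obtain ⟨R, -, hR⟩ := hasBasis_cobounded_norm.eventually_iff.mp
    (eventually_log_eval_div_eval_cobounded hp hq hdeg (half_pos hc))
  have hR' : ∀ w : ℂ, R ≤ |w.re| → R ≤ ‖w‖ := fun w hw => hw.trans (abs_re_le_norm w)
  refine ⟨R + (1 + |Real.log ‖a‖|) / c, fun z hz _ hpole => ?_⟩
  have hlog := log_norm_eq_of_mul_exp_eq_one hpole
  have hzR : R ≤ ‖z‖ := le_of_add_le_of_nonneg_left hz (by positivity)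
  obtain ⟨-, -, -, hre_z, hsmall⟩ := hR hzR
  have him : |z.im| ≤ (1 + |Real.log ‖a‖|) / c := by
    have h := (abs_re_le_norm _).trans hsmall.le
    rw [hre_z, hlog] at h
    rw [le_div_iff₀' hc, ← abs_of_pos hc, ← abs_mul]
    linarith [abs_sub_abs_le_abs_sub (c * z.im) (Real.log ‖a‖)]
  have hx : R ≤ |z.re| := by linarith [norm_le_abs_re_add_abs_im z]
  obtain ⟨hq_x, -, -, hre_x, -⟩ := hR (hR' z.re (by rwa [ofReal_re]))
  refine im_eq_zero_of_re_sub_eq (half_lt_self hc) (fun w hw => (hR (hR' w hw)).2.1)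
    (fun w hw => (hR (hR' w hw)).2.2.1) hx ?_
  rw [hre_z, hre_x, hmod z.re hq_x, hlog, Real.log_one]
  ring

/-- Let `f(z) = D + E/(1 - S(z)e^{icz})` where `c > 0`, `E ≠ 0`, `D ∈ ℂ`, and `S = p/q`
is a rational function with `|S(x)| = 1` for real `x` and `S(∞) ≠ 0, ∞` (so `p` and `q`
are nonzero of equal degree). If `f` is real on `ℝ`, then all poles `z` of `f`
(i.e. solutions of `S(z)e^{icz} = 1`) with `|z|` sufficiently large are real. -/
theorem large_poles_are_real (c : ℝ) (hc : 0 < c) (D E : ℂ) (hE : E ≠ 0)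
    (p q : Polynomial ℂ) (hp : p ≠ 0) (hq : q ≠ 0)
    (hdeg : p.natDegree = q.natDegree)
    (hmod : ∀ x : ℝ, q.eval (x : ℂ) ≠ 0 →
      ‖p.eval (x : ℂ) / q.eval (x : ℂ)‖ = 1)
    (hreal : ∀ x : ℝ, q.eval (x : ℂ) ≠ 0 →
      1 - (p.eval (x : ℂ) / q.eval (x : ℂ)) * Complex.exp (Complex.I * c * x) ≠ 0 →
      (D + E / (1 - (p.eval (x : ℂ) / q.eval (x : ℂ))
          * Complex.exp (Complex.I * c * x))).im = 0) :
    ∃ R₀ : ℝ, ∀ z : ℂ, R₀ ≤ ‖z‖ → q.eval z ≠ 0 →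
      (p.eval z / q.eval z) * Complex.exp (Complex.I * c * z) = 1 → z.im = 0 :=
  large_poles_are_real_general c hc p q hp hq hdeg hmod
end
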